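/- arXiv:2308.15904 — 11 statements merged into one kernel-verified Lean document; each statement's English description precedes it below -/
import Mathlib

section
/- If a word w over [n] 12-represents a labeled graph G and i is a letter occurring more than twice in w, then the word obtained from w by removing all occurrences of i strictly between the first and last occurrence of i still 12-represents G. Consequently, every 12-representable labeled graph has a 12-representant in which each letter occurs at most twice. -/
/-- Every occurrence of `j` precedes every occurrence of `i` in the word `w`. -/
def EveryBefore (w : List ℕ) (j i : ℕ) : Prop :=
  ∀ p q : Fin w.length, w.get p = j → w.get q = i → p < q

/-- The word `w` 12-represents the graph `G` on the vertex set `{1, …, n}`: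
`w` uses only letters from `{1, …, n}`, contains each of them at least once, and
for `i < j` in `{1, …, n}`, `i` and `j` are adjacent iff every `j` occurs before every `i`. -/
def Represents12 (n : ℕ) (G : SimpleGraph ℕ) (w : List ℕ) : Prop :=
  (∀ x ∈ w, 1 ≤ x ∧ x ≤ n) ∧
  (∀ i, 1 ≤ i → i ≤ n → i ∈ w) ∧
  (∀ i j, 1 ≤ i → i < j → j ≤ n → (G.Adj i j ↔ EveryBefore w j i))

/-- `w` is a permutation of `{1, …, n}`, i.e. each letter occurs exactly once. -/
def IsPermWord (n : ℕ) (w : List ℕ) : Prop :=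
  w.Perm (List.range' 1 n)

/-!
For distinct letters `i ≠ j`, "every `j` precedes every `i`" says exactly that `[i, j]` is not a
subsequence of the word. So whether a word 12-represents `G` depends only on its alphabet and its
two-letter subsequences. Deleting the inner copies of `i` keeps both: a subsequence `[i, j]` or
`[j, i]` can use the outer copies of `i` instead, and subsequences avoiding `i` are untouched.
Since the deletion strictly shortens a word with a letter occurring more than twice, iterating it
terminates.
-/

namespace List

variable {α : Type*}

theorem pair_sublist_append_cons_iff_mem_right {u v : List α} {i j : α} (hi : i ∉ u) :
    [i, j] <+ u ++ i :: v ↔ j ∈ v := by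
  refine ⟨fun h => ?_, fun h => sublist_append_of_sublist_right (cons_sublist_cons.2 (by simpa))⟩
  obtain ⟨l₁, l₂, hl, h₁, h₂⟩ := sublist_append_iff.1 h
  rcases l₁ with _ | ⟨a, l₁⟩
  · rw [nil_append] at hl
    subst hl
    simpa using h₂
  · obtain rfl : i = a := (cons_eq_cons.1 hl).1
    exact absurd (h₁.subset mem_cons_self) hi

theorem pair_sublist_append_cons_iff_mem_left {u v : List α} {i j : α} (hi : i ∉ v) :
    [j, i] <+ u ++ i :: v ↔ j ∈ u := by
  rw [← reverse_sublist]
  simpa using pair_sublist_append_cons_iff_mem_right (u := v.reverse) (v := u.reverse) (j := j)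
    (by simpa using hi)

theorem exists_eq_append_cons_append_cons_of_two_le_count [DecidableEq α] {w : List α} {i : α}
    (h : 2 ≤ w.count i) : ∃ w₁ m w₃, w = w₁ ++ i :: m ++ i :: w₃ ∧ i ∉ w₁ ∧ i ∉ w₃ := by
  obtain ⟨w₁, t, rfl, h₁⟩ := eq_append_cons_of_mem (count_pos_iff.1 (by omega : 0 < w.count i))
  have ht : i ∈ t.reverse := by
    rw [mem_reverse]
    simpa [count_eq_zero_of_not_mem h₁] using h
  obtain ⟨u, v, huv, hu⟩ := eq_append_cons_of_mem ht
  refine ⟨w₁, v.reverse, u.reverse, ?_, h₁, by simpa using hu⟩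
  rw [← reverse_reverse t, huv]
  simp

end List

open List

theorem everyBefore_iff_not_pair_sublist {w : List ℕ} {j i : ℕ} (hji : j ≠ i) :
    EveryBefore w j i ↔ ¬ [i, j] <+ w := by
  have hpairwise : (¬ [i, j] <+ w) ↔ w.Pairwise (fun x y => ¬ (x = i ∧ y = j)) := by
    rw [pairwise_iff_forall_sublist]
    exact ⟨fun h a b hab ⟨ha, hb⟩ => h (ha ▸ hb ▸ hab), fun h hij => h hij ⟨rfl, rfl⟩⟩
  rw [hpairwise, pairwise_iff_getElem]
  constructor
  · intro h p q hp hq hpq ⟨hpi, hqj⟩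
    exact absurd (h ⟨q, hq⟩ ⟨p, hp⟩ hqj hpi) (by simp [Fin.lt_def]; omega)
  · intro h p q hp hq
    by_contra hqp
    rcases (not_lt.1 hqp).lt_or_eq with hlt | heq
    · exact h q p q.2 p.2 hlt ⟨hq, hp⟩
    · exact hji (hp ▸ hq ▸ heq ▸ rfl)

theorem Represents12.of_pair_sublist_iff {n : ℕ} {G : SimpleGraph ℕ} {w w' : List ℕ}
    (h : Represents12 n G w) (hmem : ∀ x, x ∈ w ↔ x ∈ w')
    (hpair : ∀ a b, a ≠ b → ([a, b] <+ w ↔ [a, b] <+ w')) : Represents12 n G w' := by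
  obtain ⟨hletters, hall, hadj⟩ := h
  refine ⟨fun x hx => hletters x ((hmem x).2 hx), fun i hi hin => (hmem i).1 (hall i hi hin),
    fun i j hi hij hjn => ?_⟩
  have hji : j ≠ i := hij.ne'
  rw [hadj i j hi hij hjn, everyBefore_iff_not_pair_sublist hji,
    everyBefore_iff_not_pair_sublist hji, hpair i j hji.symm]

section Collapse

variable {w₁ m w₃ : List ℕ} {i : ℕ}

theorem mem_collapse_iff (x : ℕ) :
    x ∈ w₁ ++ i :: m ++ i :: w₃ ↔ x ∈ w₁ ++ i :: m.filter (· ≠ i) ++ i :: w₃ := by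
  by_cases hx : x = i <;> simp [hx]

theorem pair_sublist_collapse_iff (h₁ : i ∉ w₁) (h₃ : i ∉ w₃) {a b : ℕ} (hab : a ≠ b) :
    [a, b] <+ w₁ ++ i :: m ++ i :: w₃ ↔ [a, b] <+ w₁ ++ i :: m.filter (· ≠ i) ++ i :: w₃ := by
  refine ⟨fun h => ?_, fun h => h.trans ?_⟩
  · rcases eq_or_ne a i with rfl | hai
    · simp only [append_assoc, cons_append] at h ⊢
      rw [pair_sublist_append_cons_iff_mem_right h₁] at h ⊢
      simpa [hab.symm] using h
    rcases eq_or_ne b i with rfl | hbi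
    · rw [pair_sublist_append_cons_iff_mem_left h₃] at h ⊢
      simpa [hai] using h
    have hfilter : [a, b] <+ (w₁ ++ i :: m ++ i :: w₃).filter (· ≠ i) := by
      simpa [hai, hbi] using h.filter (· ≠ i)
    have hsame : (w₁ ++ i :: m ++ i :: w₃).filter (· ≠ i)
        = (w₁ ++ i :: m.filter (· ≠ i) ++ i :: w₃).filter (· ≠ i) := by
      simp [filter_append, filter_filter]
    exact (hsame ▸ hfilter).trans filter_sublist
  · exact (((filter_sublist (l := m)).cons_cons i).append_left w₁).append_right _

theorem Represents12.collapse {n : ℕ} {G : SimpleGraph ℕ}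
    (h : Represents12 n G (w₁ ++ i :: m ++ i :: w₃)) (h₁ : i ∉ w₁) (h₃ : i ∉ w₃) :
    Represents12 n G (w₁ ++ i :: m.filter (· ≠ i) ++ i :: w₃) :=
  h.of_pair_sublist_iff mem_collapse_iff fun _ _ hab => pair_sublist_collapse_iff h₁ h₃ hab

end Collapse

theorem Represents12.exists_count_le_two {n : ℕ} {G : SimpleGraph ℕ} {w : List ℕ}
    (h : Represents12 n G w) : ∃ w', Represents12 n G w' ∧ ∀ x, w'.count x ≤ 2 := by
  induction hN : w.length using Nat.strong_induction_on generalizing w with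
  | _ N ih =>
    by_cases hle : ∀ x, w.count x ≤ 2
    · exact ⟨w, h, hle⟩
    obtain ⟨i, hi⟩ := not_forall.1 hle
    obtain ⟨w₁, m, w₃, rfl, h₁, h₃⟩ := exists_eq_append_cons_append_cons_of_two_le_count
      (by omega : 2 ≤ w.count i)
    have him : i ∈ m := by
      rw [← count_pos_iff]
      simp [count_eq_zero_of_not_mem h₁, count_eq_zero_of_not_mem h₃] at hi
      omega
    have hshorter : (m.filter (· ≠ i)).length < m.length :=
      length_filter_lt_length_iff_exists.2 ⟨i, him, by simp⟩
    refine ih _ ?_ (h.collapse h₁ h₃) rfl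
    simp only [← hN, length_append, length_cons]
    omega

theorem stmt_0 :
    (∀ (n : ℕ) (G : SimpleGraph ℕ) (w₁ w₂ w₃ : List ℕ) (i : ℕ),
      Represents12 n G (w₁ ++ i :: w₂ ++ i :: w₃) →
      i ∉ w₁ → i ∉ w₃ →
      2 < (w₁ ++ i :: w₂ ++ i :: w₃).count i →
      Represents12 n G (w₁ ++ i :: (w₂.filter (· ≠ i)) ++ i :: w₃)) ∧
    (∀ (n : ℕ) (G : SimpleGraph ℕ),
      (∃ w, Represents12 n G w) →
      ∃ w, Represents12 n G w ∧ ∀ x, w.count x ≤ 2) :=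
  ⟨fun _ _ _ _ _ _ h h₁ h₃ _ => h.collapse h₁ h₃, fun _ _ ⟨_, h⟩ => h.exists_count_le_two⟩
end

section
/- A labeled graph G on [n] is 12-representable by a permutation of [n] if and only if there do not exist vertices x < y < z with (xy ∈ E and yz ∈ E and xz ∉ E) and there do not exist vertices x < y < z with (xy ∉ E and yz ∉ E and xz ∈ E). -/
theorem stmt_5 (n : ℕ) (G : SimpleGraph ℕ) :
    (∃ π, IsPermWord n π ∧ Represents12 n G π) ↔
    ((¬ ∃ x y z, 1 ≤ x ∧ x < y ∧ y < z ∧ z ≤ n ∧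
        G.Adj x y ∧ G.Adj y z ∧ ¬ G.Adj x z) ∧
     (¬ ∃ x y z, 1 ≤ x ∧ x < y ∧ y < z ∧ z ≤ n ∧
        ¬ G.Adj x y ∧ ¬ G.Adj y z ∧ G.Adj x z)) := by
  classical
  constructor
  · rintro ⟨π, hperm, hrange, hmem, hadj⟩
    have hnd : π.Nodup := hperm.nodup_iff.mpr (by
      have := List.nodup_range' (s := 1) (n := n) (step := 1)
      simpa using this)
    have uniq : ∀ (v : ℕ) (p q : Fin π.length), π.get p = v → π.get q = v → p = q :=
      fun v p q hp hq => hnd.get_inj_iff.mp (hp.trans hq.symm)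
    have hEBiff : ∀ (u v : ℕ) (p q : Fin π.length), π.get p = v → π.get q = u →
        (EveryBefore π v u ↔ p < q) := by
      intro u v p q hp hq
      constructor
      · exact fun h => h p q hp hq
      · intro hpq p' q' hp' hq'
        rw [uniq v p' p hp' hp, uniq u q' q hq' hq]
        exact hpq
    constructor
    · rintro ⟨x, y, z, hx, hxy, hyz, hz, axy, ayz, naxz⟩
      have h1 : EveryBefore π y x := (hadj x y hx hxy (by omega)).1 axy
      have h2 : EveryBefore π z y := (hadj y z (by omega) hyz hz).1 ayz
      apply naxz
      refine (hadj x z hx (by omega) hz).2 ?_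
      intro p q hp hq
      obtain ⟨r, hr⟩ := List.get_of_mem (hmem y (by omega) (by omega))
      exact lt_trans (h2 p r hp hr) (h1 r q hr hq)
    · rintro ⟨x, y, z, hx, hxy, hyz, hz, nxy, nyz, axz⟩
      obtain ⟨pX, hpX⟩ := List.get_of_mem (hmem x hx (by omega))
      obtain ⟨pY, hpY⟩ := List.get_of_mem (hmem y (by omega) (by omega))
      obtain ⟨pZ, hpZ⟩ := List.get_of_mem (hmem z (by omega) hz)
      have e1 : ¬ (pY < pX) := fun h =>
        nxy ((hadj x y hx hxy (by omega)).2 ((hEBiff x y pY pX hpY hpX).2 h))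
      have e2 : ¬ (pZ < pY) := fun h =>
        nyz ((hadj y z (by omega) hyz hz).2 ((hEBiff y z pZ pY hpZ hpY).2 h))
      have e3 : pZ < pX :=
        (hEBiff x z pZ pX hpZ hpX).1 ((hadj x z hx (by omega) hz).1 axz)
      simp only [Fin.lt_def, not_lt] at e1 e2 e3
      omega
  · rintro ⟨h1, h2⟩
    set A : ℕ → ℕ → Prop := fun a b => G.Adj a b ∧ 1 ≤ a ∧ b ≤ n with hA
    have P1 : ∀ x y z, x < y → y < z → A x y → A y z → A x z := by
      rintro x y z hxy hyz ⟨a1, hx1, _⟩ ⟨a2, _, hz2⟩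
      refine ⟨?_, hx1, hz2⟩
      by_contra hc
      exact h1 ⟨x, y, z, hx1, hxy, hyz, hz2, a1, a2, hc⟩
    have P2 : ∀ x y z, x < y → y < z → ¬ A x y → ¬ A y z → ¬ A x z := by
      rintro x y z hxy hyz n1 n2 ⟨a3, hx1, hz2⟩
      have n1' : ¬ G.Adj x y := fun h => n1 ⟨h, hx1, by omega⟩
      have n2' : ¬ G.Adj y z := fun h => n2 ⟨h, by omega, hz2⟩
      exact h2 ⟨x, y, z, hx1, hxy, hyz, hz2, n1', n2', a3⟩
    set R : ℕ → ℕ → Prop := fun a b => a = b ∨ (a < b ∧ ¬ A a b) ∨ (b < a ∧ A b a) with hR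
    have Rtrans : ∀ a b c, R a b → R b c → R a c := by
      rintro a b c (rfl | ⟨hab, nab⟩ | ⟨hba, aba⟩) hbc
      · exact hbc
      · rcases hbc with rfl | ⟨hbc, nbc⟩ | ⟨hcb, acb⟩
        · exact Or.inr (Or.inl ⟨hab, nab⟩)
        · exact Or.inr (Or.inl ⟨lt_trans hab hbc, P2 a b c hab hbc nab nbc⟩)
        · rcases lt_trichotomy a c with h | rfl | h
          · exact Or.inr (Or.inl ⟨h, fun aac => nab (P1 a c b h hcb aac acb)⟩)
          · exact Or.inl rfl
          · refine Or.inr (Or.inr ⟨h, ?_⟩)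
            by_contra hca
            exact (P2 c a b h hab hca nab) acb
      · rcases hbc with rfl | ⟨hbc, nbc⟩ | ⟨hcb, acb⟩
        · exact Or.inr (Or.inr ⟨hba, aba⟩)
        · rcases lt_trichotomy a c with h | rfl | h
          · exact Or.inr (Or.inl ⟨h, fun aac => nbc (P1 b a c hba h aba aac)⟩)
          · exact Or.inl rfl
          · refine Or.inr (Or.inr ⟨h, ?_⟩)
            by_contra hca
            exact (P2 b c a hbc h nbc hca) aba
        · exact Or.inr (Or.inr ⟨lt_trans hcb hba, P1 c b a hcb hba acb aba⟩)
    have Rtotal : ∀ a b, R a b ∨ R b a := by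
      intro a b
      rcases lt_trichotomy a b with h | rfl | h
      · by_cases hab : A a b
        · exact Or.inr (Or.inr (Or.inr ⟨h, hab⟩))
        · exact Or.inl (Or.inr (Or.inl ⟨h, hab⟩))
      · exact Or.inl (Or.inl rfl)
      · by_cases hab : A b a
        · exact Or.inl (Or.inr (Or.inr ⟨h, hab⟩))
        · exact Or.inr (Or.inr (Or.inl ⟨h, hab⟩))
    set le : ℕ → ℕ → Bool := fun a b => decide (R a b) with hle
    set π : List ℕ := (List.range' 1 n).mergeSort le with hπ
    have hperm : π.Perm (List.range' 1 n) := List.mergeSort_perm _ _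
    have hpw : π.Pairwise (fun a b => le a b = true) :=
      List.pairwise_mergeSort
        (fun a b c hab hbc => by
          simp only [hle, decide_eq_true_eq] at *
          exact Rtrans a b c hab hbc)
        (fun a b => by
          simp only [hle, Bool.or_eq_true, decide_eq_true_eq]
          exact Rtotal a b) _
    have hpw' : π.Pairwise R := hpw.imp (fun h => by simpa [hle] using h)
    have hmemiff : ∀ x, x ∈ π ↔ (1 ≤ x ∧ x ≤ n) := by
      intro x
      rw [hperm.mem_iff, List.mem_range'_1]
      omega
    refine ⟨π, hperm, fun x hx => (hmemiff x).1 hx,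
      fun i hi1 hin => (hmemiff i).2 ⟨hi1, hin⟩, ?_⟩
    intro i j hi1 hij hjn
    have pairget : ∀ p q : Fin π.length, p < q → R (π.get p) (π.get q) :=
      fun p q hpq => List.pairwise_iff_get.mp hpw' p q hpq
    constructor
    · intro hadj p q hp hq
      have hAij : A i j := ⟨hadj, hi1, hjn⟩
      rcases lt_trichotomy p q with h | h | h
      · exact h
      · exfalso
        subst h
        have : j = i := hp.symm.trans hq
        omega
      · exfalso
        have hR' := pairget q p h
        rw [hq, hp] at hR'
        rcases hR' with h' | ⟨h', nA⟩ | ⟨h', _⟩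
        · omega
        · exact nA hAij
        · omega
    · intro hEB
      obtain ⟨p, hp⟩ := List.get_of_mem ((hmemiff j).2 ⟨by omega, hjn⟩)
      obtain ⟨q, hq⟩ := List.get_of_mem ((hmemiff i).2 ⟨hi1, by omega⟩)
      have hpq := hEB p q hp hq
      have hR' := pairget p q hpq
      rw [hp, hq] at hR'
      rcases hR' with h' | ⟨h', _⟩ | ⟨h', hAij⟩
      · omega
      · omega
      · exact hAij.1
end

section
/- If a labeled graph G on [n] is 12-representable by a 231-avoiding word, then G is 12-representable by a 231-avoiding permutation of [n]. -/
/-- `w` avoids the pattern 231: no subsequence b, c, a with a < b < c. -/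
def Avoids231 (w : List ℕ) : Prop :=
  ¬ ∃ p q r : Fin w.length, p < q ∧ q < r ∧ w.get r < w.get p ∧ w.get p < w.get q

/-! Order the letters so that a pair `x < y` keeps its natural order unless `w` places every `y`
before every `x`. Avoiding 231 makes this relation transitive on the letters of `w`, so sorting
`1, …, n` by it yields a permutation with exactly the same forced pairs as `w`, hence representing
the same graph; a 231 in that permutation would lift to a 231 in `w`. -/

theorem List.exists_perm_pairwise_of_trichotomous {α : Type*} {r : α → α → Prop} {l : List α}
    (hnd : l.Nodup) (htrans : ∀ a ∈ l, ∀ b ∈ l, ∀ c ∈ l, r a b → r b c → r a c)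
    (htri : ∀ a ∈ l, ∀ b ∈ l, a ≠ b → r a b ∨ r b a) :
    ∃ l' : List α, l'.Perm l ∧ l'.Pairwise r := by
  classical
  let le : {x // x ∈ l} → {x // x ∈ l} → Bool := fun a b => decide (a = b ∨ r a b)
  have hsorted : (l.attach.mergeSort le).Pairwise (fun a b => le a b) := by
    refine List.pairwise_mergeSort (fun a b c hab hbc => ?_) (fun a b => ?_) l.attach
    · simp only [le, decide_eq_true_eq] at hab hbc ⊢
      rcases hab with rfl | hab
      · exact hbc
      rcases hbc with rfl | hbc
      · exact Or.inr hab
      exact Or.inr (htrans a a.2 b b.2 c c.2 hab hbc)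
    · by_cases hab : a = b
      · simp [le, hab]
      · have := htri a a.2 b b.2 (fun h => hab (Subtype.ext h))
        rcases this with h | h <;> simp [le, h]
  have hnd' : (l.attach.mergeSort le).Nodup :=
    (List.mergeSort_perm _ _).nodup_iff.mpr (List.nodup_attach.mpr hnd)
  refine ⟨(l.attach.mergeSort le).map Subtype.val, ?_, ?_⟩
  · simpa using (List.mergeSort_perm l.attach le).map Subtype.val
  · refine List.pairwise_map.mpr ((hnd'.and hsorted).imp fun {a b} ⟨hne, hab⟩ => ?_)
    simp only [le, decide_eq_true_eq] at hab
    exact hab.resolve_left hne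

theorem Avoids231.false_of_pattern {w : List ℕ} (hA : Avoids231 w) {a b c : ℕ}
    {pb pc pa : Fin w.length} (hb : w.get pb = b) (hc : w.get pc = c) (ha : w.get pa = a)
    (hpbc : pb ≤ pc) (hpca : pc < pa) (hab : a < b) (hbc : b < c) : False := by
  refine hA ⟨pb, pc, pa, lt_of_le_of_ne hpbc ?_, hpca, ?_, ?_⟩
  · rintro rfl
    omega
  · rwa [ha, hb]
  · rwa [hb, hc]

theorem EveryBefore.trans {w : List ℕ} {a b c : ℕ} (hb : b ∈ w) (hab : EveryBefore w a b)
    (hbc : EveryBefore w b c) : EveryBefore w a c := by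
  obtain ⟨q, hq⟩ := List.mem_iff_get.mp hb
  exact fun p r hp hr => (hab p q hp hq).trans (hbc q r hq hr)

theorem exists_le_of_not_everyBefore {w : List ℕ} {a b : ℕ} (h : ¬ EveryBefore w a b) :
    ∃ p q : Fin w.length, w.get p = a ∧ w.get q = b ∧ q ≤ p := by
  simpa [EveryBefore] using h

def Prec (w : List ℕ) (x y : ℕ) : Prop :=
  (x < y ∧ ¬ EveryBefore w y x) ∨ (y < x ∧ EveryBefore w x y)

section Prec

variable {w : List ℕ} {x y z : ℕ}

theorem Prec.asymm (h : Prec w x y) : ¬ Prec w y x := by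
  rcases h with ⟨h, hs⟩ | ⟨h, hs⟩ <;> rintro (⟨h', hs'⟩ | ⟨h', hs'⟩) <;>
    first | omega | contradiction

theorem prec_or_prec_of_ne (w : List ℕ) (h : x ≠ y) : Prec w x y ∨ Prec w y x := by
  unfold Prec
  rcases h.lt_or_gt with h | h <;> tauto

theorem prec_iff_everyBefore_of_lt (h : x < y) : Prec w y x ↔ EveryBefore w y x := by
  unfold Prec
  constructor
  · rintro (⟨h', _⟩ | ⟨_, hs⟩)
    · omega
    · exact hs
  · exact fun hs => Or.inr ⟨h, hs⟩

theorem not_everyBefore_of_prec_of_prec (hA : Avoids231 w) (hx : x ∈ w) (hz : z ∈ w)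
    (hxy : Prec w x y) (hyz : Prec w y z) (hxz : x < z) : ¬ EveryBefore w z x := by
  intro hzx
  rcases hxy with ⟨hxy, hyx⟩ | ⟨hyx, hxy⟩ <;>
    rcases hyz with ⟨hyz, hzy⟩ | ⟨hzy, hyz⟩
  · obtain ⟨pz, py, hpz, hpy, hle⟩ := exists_le_of_not_everyBefore hzy
    obtain ⟨px, hpx⟩ := List.mem_iff_get.mp hx
    exact hA.false_of_pattern hpy hpz hpx hle (hzx pz px hpz hpx) hxy hyz
  · exact hyx (hyz.trans hz hzx)
  · exact hzy (hzx.trans hx hxy)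
  · omega

theorem everyBefore_of_prec_of_prec (hA : Avoids231 w) (hy : y ∈ w)
    (hxy : Prec w x y) (hyz : Prec w y z) (hzx : z < x) : EveryBefore w x z := by
  intro px pz hpx hpz
  rcases hxy with ⟨hxy, hyx⟩ | ⟨hyx, hxy⟩ <;>
    rcases hyz with ⟨hyz, hzy⟩ | ⟨hzy, hyz⟩
  · omega
  · obtain ⟨py, px', hpy, hpx', hle⟩ := exists_le_of_not_everyBefore hyx
    exact (hA.false_of_pattern hpx' hpy hpz hle (hyz py pz hpy hpz) hzx hxy).elim
  · by_contra hle
    obtain ⟨-, qy, -, hqy, -⟩ := exists_le_of_not_everyBefore hzy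
    exact hA.false_of_pattern hpz hpx hqy (not_lt.mp hle) (hxy px qy hpx hqy) hyz hzx
  · exact hxy.trans hy hyz px pz hpx hpz

theorem Prec.trans (hA : Avoids231 w) (hx : x ∈ w) (hy : y ∈ w) (hz : z ∈ w)
    (hxy : Prec w x y) (hyz : Prec w y z) : Prec w x z := by
  rcases lt_trichotomy x z with hxz | rfl | hzx
  · exact Or.inl ⟨hxz, not_everyBefore_of_prec_of_prec hA hx hz hxy hyz hxz⟩
  · exact (hxy.asymm hyz).elim
  · exact Or.inr ⟨hzx, everyBefore_of_prec_of_prec hA hy hxy hyz hzx⟩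

end Prec

theorem everyBefore_iff_of_pairwise {r : ℕ → ℕ → Prop} {l : List ℕ}
    (hasymm : ∀ a b, r a b → ¬ r b a) (hl : l.Pairwise r) {x y : ℕ} (hx : x ∈ l) (hy : y ∈ l) :
    EveryBefore l x y ↔ r x y := by
  rw [List.pairwise_iff_get] at hl
  obtain ⟨p, rfl⟩ := List.mem_iff_get.mp hx
  obtain ⟨q, rfl⟩ := List.mem_iff_get.mp hy
  refine ⟨fun h => hl p q (h p q rfl rfl), fun hr p' q' hp' hq' => ?_⟩
  by_contra hle
  rcases (not_lt.mp hle).lt_or_eq with hlt | rfl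
  · exact hasymm _ _ hr (hp' ▸ hq' ▸ hl q' p' hlt)
  · rw [← hp', ← hq'] at hr
    exact hasymm _ _ hr hr

theorem Avoids231.of_pairwise_prec {w π : List ℕ} (hA : Avoids231 w) (hsub : ∀ x ∈ π, x ∈ w)
    (hπ : π.Pairwise (Prec w)) : Avoids231 π := by
  rintro ⟨p, q, r, hpq, hqr, hrp, hpq'⟩
  rw [List.pairwise_iff_get] at hπ
  have hcb : ¬ EveryBefore w (π.get q) (π.get p) :=
    ((hπ p q hpq).resolve_right fun h => by omega).2
  have hca : EveryBefore w (π.get q) (π.get r) :=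
    ((hπ q r hqr).resolve_left fun h => by omega).2
  obtain ⟨pc, pb, hpc, hpb, hle⟩ := exists_le_of_not_everyBefore hcb
  obtain ⟨pa, hpa⟩ := List.mem_iff_get.mp (hsub _ (π.get_mem r))
  exact hA.false_of_pattern hpb hpc hpa hle (hca pc pa hpc hpa) hrp hpq'

theorem stmt_6 (n : ℕ) (G : SimpleGraph ℕ)
    (h : ∃ w, Avoids231 w ∧ Represents12 n G w) :
    ∃ π, IsPermWord n π ∧ Avoids231 π ∧ Represents12 n G π := by
  obtain ⟨w, hA, -, hcover, hadj⟩ := h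
  have hletters : ∀ x ∈ List.range' 1 n, x ∈ w := fun x hx => by
    rw [List.mem_range'_1] at hx
    exact hcover x (by omega) (by omega)
  obtain ⟨π, hperm, hsorted⟩ :=
    List.exists_perm_pairwise_of_trichotomous (r := Prec w) List.nodup_range'
    (fun x hx y hy z hz => Prec.trans hA (hletters x hx) (hletters y hy) (hletters z hz))
    (fun x _ y _ => prec_or_prec_of_ne w)
  have hmem : ∀ x, x ∈ π ↔ 1 ≤ x ∧ x ≤ n := fun x => by
    rw [hperm.mem_iff, List.mem_range'_1]
    omega
  refine ⟨π, hperm, hA.of_pairwise_prec (fun x hx => hletters x (hperm.subset hx)) hsorted,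
    fun x hx => (hmem x).mp hx, fun i hi hin => (hmem i).mpr ⟨hi, hin⟩,
    fun i j hi hij hj => ?_⟩
  have hiπ : i ∈ π := (hmem i).mpr ⟨hi, by omega⟩
  have hjπ : j ∈ π := (hmem j).mpr ⟨by omega, hj⟩
  rw [hadj i j hi hij hj, everyBefore_iff_of_pairwise (fun _ _ => Prec.asymm) hsorted hjπ hiπ,
    prec_iff_everyBefore_of_lt hij]
end

section
/- If a labeled graph G on [n] is 12-representable by a 321-avoiding word, then there is a relabeling of G (obtained by moving isolated vertices to the largest labels) that is 12-representable by a 321-avoiding permutation. -/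
/-- `w` avoids the pattern 321: no strictly decreasing subsequence of length 3. -/
def Avoids321 (w : List ℕ) : Prop :=
  ¬ ∃ p q r : Fin w.length, p < q ∧ q < r ∧ w.get r < w.get q ∧ w.get q < w.get p

/-- `v` is an isolated vertex of `G` restricted to `{1, …, n}`. -/
def IsolatedIn (n : ℕ) (G : SimpleGraph ℕ) (v : ℕ) : Prop :=
  ∀ u, 1 ≤ u → u ≤ n → ¬ G.Adj v u

open Set

theorem Equiv.Perm.exists_eqOn_of_mapsTo_of_injOn {α : Type*} {s : Set α} {f : α → α}
    (hs : s.Finite) (hmaps : MapsTo f s s) (hinj : InjOn f s) :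
    ∃ σ : Equiv.Perm α, EqOn σ f s := by
  classical
  have hbij : BijOn f s s := (hs.injOn_iff_bijOn_of_mapsTo hmaps).mp hinj
  exact ⟨Equiv.Perm.ofSubtype (hbij.equiv f), fun x hx => by
    simp [Equiv.Perm.ofSubtype_apply_of_mem _ hx, BijOn.equiv]⟩

theorem IsPermWord.mem_iff {n : ℕ} {π : List ℕ} (hπ : IsPermWord n π) {x : ℕ} :
    x ∈ π ↔ x ∈ Icc 1 n := by
  rw [List.Perm.mem_iff hπ, List.mem_range'_1, mem_Icc]
  omega

theorem exists_isPermWord_pairwise {n : ℕ} {g : ℕ → ℕ} (hg : InjOn g (Icc 1 n)) :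
    ∃ π, IsPermWord n π ∧ π.Pairwise (fun a b => g a < g b) := by
  set π := (List.range' 1 n).mergeSort (fun a b => decide (g a ≤ g b))
  have hπ : IsPermWord n π := List.mergeSort_perm _ _
  have hle : π.Pairwise (fun a b => g a ≤ g b) := by
    simpa using List.pairwise_mergeSort (le := fun a b => decide (g a ≤ g b))
      (fun _ _ _ hab hbc => by simp only [decide_eq_true_eq] at *; omega)
      (fun a b => by simpa using le_total (g a) (g b)) _
  have hnodup : π.Nodup := hπ.nodup_iff.mpr List.nodup_range'
  refine ⟨π, hπ, (hle.and hnodup).imp_of_mem fun ha hb ⟨hab, hne⟩ => ?_⟩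
  exact lt_of_le_of_ne hab fun h => hne (hg (hπ.mem_iff.mp ha) (hπ.mem_iff.mp hb) h)

theorem exists_perm_strictMonoOn_comp {n : ℕ} {f : ℕ → ℕ} (hf : InjOn f (Icc 1 n)) :
    ∃ σ : Equiv.Perm ℕ, MapsTo σ (Icc 1 n) (Icc 1 n) ∧ StrictMonoOn (f ∘ σ) (Icc 1 n) := by
  obtain ⟨l, hl, hsorted⟩ := exists_isPermWord_pairwise hf
  have hlen : l.length = n := by simpa using hl.length_eq
  set g : ℕ → ℕ := fun t => l.getD (t - 1) 0
  have hg : ∀ t ∈ Icc 1 n, ∃ h : t - 1 < l.length, g t = l[t - 1] := fun t ⟨h1, h2⟩ =>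
    have h : t - 1 < l.length := by omega
    ⟨h, List.getD_eq_getElem _ _ h⟩
  have hmaps : MapsTo g (Icc 1 n) (Icc 1 n) := fun t ht => by
    obtain ⟨h, hgt⟩ := hg t ht
    exact hgt ▸ hl.mem_iff.mp (List.getElem_mem h)
  have hmono : StrictMonoOn (f ∘ g) (Icc 1 n) := fun s hs t ht hst => by
    obtain ⟨h, hgs⟩ := hg s hs
    obtain ⟨h', hgt⟩ := hg t ht
    simp only [Function.comp_apply, hgs, hgt]
    exact List.pairwise_iff_getElem.mp hsorted _ _ h h' (by have := hs.1; omega)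
  obtain ⟨σ, hσ⟩ := Equiv.Perm.exists_eqOn_of_mapsTo_of_injOn (finite_Icc 1 n) hmaps
    hmono.injOn.of_comp
  exact ⟨σ, hmaps.congr hσ.symm, hmono.congr fun t ht => by simp [hσ ht]⟩

theorem everyBefore_iff_of_pairwise_s9 {l : List ℕ} {g : ℕ → ℕ}
    (hl : l.Pairwise (fun a b => g a < g b)) {a b : ℕ} (ha : a ∈ l) (hb : b ∈ l) :
    EveryBefore l a b ↔ g a < g b := by
  obtain ⟨p, rfl⟩ := List.mem_iff_get.mp ha
  obtain ⟨q, rfl⟩ := List.mem_iff_get.mp hb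
  refine ⟨fun h => List.pairwise_iff_get.mp hl p q (h p q rfl rfl), fun h p' q' hp' hq' => ?_⟩
  by_contra! hqp
  rcases hqp.lt_or_eq with hqp | rfl
  · exact (List.pairwise_iff_get.mp hl q' p' hqp).not_gt (hp' ▸ hq' ▸ h)
  · exact h.ne (by rw [← hp', ← hq'])

theorem avoids321_of_pairwise {l : List ℕ} {g : ℕ → ℕ} (hl : l.Pairwise (fun a b => g a < g b))
    (h : ∀ a ∈ l, ∀ b ∈ l, ∀ c ∈ l, g a < g b → g b < g c → ¬ (c < b ∧ b < a)) :
    Avoids321 l := by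
  rintro ⟨p, q, r, hpq, hqr, hrq, hqp⟩
  have hsorted := List.pairwise_iff_get.mp hl
  exact h _ (List.get_mem _ _) _ (List.get_mem _ _) _ (List.get_mem _ _)
    (hsorted p q hpq) (hsorted q r hqr) ⟨hrq, hqp⟩

section Word

variable {n : ℕ} {G : SimpleGraph ℕ} {w : List ℕ}

/-- A neighbour `u > x` would have to occur before `a`, and a neighbour `u < x` after `c`;
either way it completes a 321 pattern with `q` or with `p`. -/
theorem Represents12.isolatedIn_of_lt_after_of_gt_before (hrep : Represents12 n G w)
    (hA : Avoids321 w) {x : ℕ} {a c p q : Fin w.length} (ha : w.get a = x) (hc : w.get c = x)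
    (haq : a < q) (hq : w.get q < x) (hpc : p < c) (hp : x < w.get p) :
    IsolatedIn n G x := by
  have hx := hrep.1 x (ha ▸ List.get_mem w a)
  intro u hu1 hun hadj
  obtain ⟨r, hr⟩ := List.mem_iff_get.mp (hrep.2.1 u hu1 hun)
  rcases lt_trichotomy x u with hxu | rfl | hux
  · have hra : r < a := ((hrep.2.2 x u hx.1 hxu hun).mp hadj) r a hr ha
    exact hA ⟨r, a, q, hra, haq, ha ▸ hq, ha ▸ hr ▸ hxu⟩
  · exact G.loopless.irrefl _ hadj
  · have hcr : c < r := ((hrep.2.2 u x hu1 hux hx.2).mp hadj.symm) c r hc hr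
    exact hA ⟨p, c, r, hpc, hcr, hr ▸ hc ▸ hux, hc ▸ hp⟩

def IsPivot (w : List ℕ) (x : ℕ) (r : Fin w.length) : Prop :=
  w.get r = x ∧
    (∀ b p : Fin w.length, w.get b = x → b < p → p < r → w.get p ≤ x) ∧
    (∀ b p : Fin w.length, w.get b = x → r < p → p < b → x ≤ w.get p)

theorem exists_isPivot (hrep : Represents12 n G w) (hA : Avoids321 w) {x : ℕ} (hx : x ∈ w)
    (hiso : ¬ IsolatedIn n G x) : ∃ r, IsPivot w x r := by
  set occ := Finset.univ.filter fun b : Fin w.length => w.get b = x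
  have hocc : occ.Nonempty := by
    obtain ⟨i, hi⟩ := List.mem_iff_get.mp hx
    exact ⟨i, by simpa [occ] using hi⟩
  obtain ⟨F, hF, hFmin⟩ := occ.exists_min_image id hocc
  obtain ⟨L, hL, hLmax⟩ := occ.exists_max_image id hocc
  simp only [occ, Finset.mem_filter, Finset.mem_univ, true_and, id] at hF hL hFmin hLmax
  by_cases hsmall : ∃ q, F < q ∧ q < L ∧ w.get q < x
  · obtain ⟨q, hFq, -, hq⟩ := hsmall
    refine ⟨L, hL, fun b p _ _ hpL => ?_, fun b p hb hLp hpb => ?_⟩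
    · by_contra! hp
      exact hiso (hrep.isolatedIn_of_lt_after_of_gt_before hA hF hL hFq hq hpL hp)
    · exact absurd (hLmax b hb) (not_le.mpr (hLp.trans hpb))
  · push Not at hsmall
    refine ⟨F, hF, fun b p hb hbp hpF => ?_, fun b p hb hFp hpb => ?_⟩
    · exact absurd (hFmin b hb) (not_le.mpr (hbp.trans hpF))
    · exact hsmall p hFp (hpb.trans_le (hLmax b hb))

theorem Represents12.adj_iff_of_isPivot (hrep : Represents12 n G w) {x y : ℕ} (hx : 1 ≤ x)
    (hxy : x < y) (hy : y ≤ n) {rx ry : Fin w.length} (hrx : IsPivot w x rx)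
    (hry : IsPivot w y ry) : G.Adj x y ↔ ry < rx := by
  rw [hrep.2.2 x y hx hxy hy]
  refine ⟨fun h => h ry rx hry.1 hrx.1, fun hr a b ha hb => ?_⟩
  by_contra! hba
  -- A `y` before `rx` would be a larger letter inside the span of `x` before its pivot, and `rx`
  -- before a `y` puts the smaller `x` inside the span of `y` after its pivot.
  have hne : ∀ {c d : Fin w.length}, w.get c = y → w.get d = x → c ≠ d := by
    rintro c d hc hd rfl
    omega
  rcases lt_trichotomy a rx with har | hrx_eq | hra
  · have := hrx.2.1 b a hb (hba.lt_of_ne (hne ha hb).symm) har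
    omega
  · exact hne ha hrx.1 hrx_eq
  · have := hry.2.2 a rx ha hr hra
    rw [hrx.1] at this
    omega

end Word

open Classical in
noncomputable def labelKey (n : ℕ) (G : SimpleGraph ℕ) (v : ℕ) : ℕ :=
  if IsolatedIn n G v then n + v else v

theorem labelKey_injOn (n : ℕ) (G : SimpleGraph ℕ) : InjOn (labelKey n G) (Icc 1 n) := by
  intro u ⟨hu1, hun⟩ v ⟨hv1, hvn⟩ h
  unfold labelKey at h
  split_ifs at h <;> omega

theorem labelKey_lt_of_isolatedIn {n : ℕ} {G : SimpleGraph ℕ} {u v : ℕ} (hu : 1 ≤ u) (hv : v ≤ n)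
    (hiu : IsolatedIn n G u) (hiv : ¬ IsolatedIn n G v) : labelKey n G v < labelKey n G u := by
  simp only [labelKey, if_pos hiu, if_neg hiv]
  omega

def IsPositionKey (w : List ℕ) (n : ℕ) (G : SimpleGraph ℕ) (pkey : ℕ → ℕ) : Prop :=
  ∀ v ∈ Icc 1 n, (IsolatedIn n G v → pkey v = w.length + v) ∧
    (¬ IsolatedIn n G v → ∃ r, IsPivot w v r ∧ pkey v = r)

section PositionKey

variable {n : ℕ} {G : SimpleGraph ℕ} {w : List ℕ} {pkey : ℕ → ℕ}

theorem exists_isPositionKey (hrep : Represents12 n G w) (hA : Avoids321 w) :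
    ∃ pkey, IsPositionKey w n G pkey := by
  have hkey : ∀ v ∈ Icc 1 n, ∃ k : ℕ, (IsolatedIn n G v → k = w.length + v) ∧
      (¬ IsolatedIn n G v → ∃ r, IsPivot w v r ∧ k = r) := by
    intro v hv
    by_cases hiso : IsolatedIn n G v
    · exact ⟨w.length + v, fun _ => rfl, fun h => absurd hiso h⟩
    · obtain ⟨r, hr⟩ := exists_isPivot hrep hA (hrep.2.1 v hv.1 hv.2) hiso
      exact ⟨r, fun h => absurd h hiso, fun _ => ⟨r, hr, rfl⟩⟩
  choose! pkey hpkey using hkey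
  exact ⟨pkey, hpkey⟩

theorem IsPositionKey.lt_length_iff (hkey : IsPositionKey w n G pkey) {v : ℕ} (hv : v ∈ Icc 1 n) :
    pkey v < w.length ↔ ¬ IsolatedIn n G v := by
  by_cases hiso : IsolatedIn n G v
  · simp only [(hkey v hv).1 hiso, hiso, not_true_eq_false, iff_false]
    omega
  · obtain ⟨r, -, hr⟩ := (hkey v hv).2 hiso
    simp only [hr, r.isLt, hiso, not_false_eq_true]

theorem IsPositionKey.injOn (hkey : IsPositionKey w n G pkey) : InjOn pkey (Icc 1 n) := by
  intro u hu v hv h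
  have hlu := hkey.lt_length_iff hu
  have hlv := hkey.lt_length_iff hv
  by_cases hiu : IsolatedIn n G u <;> by_cases hiv : IsolatedIn n G v
  · have := (hkey u hu).1 hiu
    have := (hkey v hv).1 hiv
    omega
  · exact absurd (h ▸ hlv.mpr hiv) (hlu.not.mpr (not_not.mpr hiu))
  · exact absurd (h ▸ hlu.mpr hiu) (hlv.not.mpr (not_not.mpr hiv))
  · obtain ⟨ru, hru, hpu⟩ := (hkey u hu).2 hiu
    obtain ⟨rv, hrv, hpv⟩ := (hkey v hv).2 hiv
    have : ru = rv := Fin.ext (by omega)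
    rw [← hru.1, ← hrv.1, this]

theorem IsPositionKey.adj_iff (hrep : Represents12 n G w) (hkey : IsPositionKey w n G pkey)
    {u v : ℕ} (hu : u ∈ Icc 1 n) (hv : v ∈ Icc 1 n) (huv : labelKey n G u < labelKey n G v) :
    G.Adj u v ↔ pkey v < pkey u := by
  by_cases hiv : IsolatedIn n G v
  · refine iff_of_false (fun h => hiv u hu.1 hu.2 h.symm) ?_
    have := (hkey v hv).1 hiv
    by_cases hiu : IsolatedIn n G u
    · have := (hkey u hu).1 hiu
      simp only [labelKey, if_pos hiu, if_pos hiv] at huv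
      omega
    · have := (hkey.lt_length_iff hu).mpr hiu
      omega
  · have hiu : ¬ IsolatedIn n G u := fun hiu =>
      (labelKey_lt_of_isolatedIn hu.1 hv.2 hiu hiv).not_gt huv
    simp only [labelKey, if_neg hiu, if_neg hiv] at huv
    obtain ⟨ru, hru, hpu⟩ := (hkey u hu).2 hiu
    obtain ⟨rv, hrv, hpv⟩ := (hkey v hv).2 hiv
    rw [hpu, hpv, Fin.val_fin_lt]
    exact hrep.adj_iff_of_isPivot hu.1 huv hv.2 hru hrv

theorem IsPositionKey.not_decreasing (hA : Avoids321 w) (hkey : IsPositionKey w n G pkey)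
    {u v x : ℕ} (hu : u ∈ Icc 1 n) (hv : v ∈ Icc 1 n) (hx : x ∈ Icc 1 n)
    (huv : pkey u < pkey v) (hvx : pkey v < pkey x) :
    ¬ (labelKey n G x < labelKey n G v ∧ labelKey n G v < labelKey n G u) := by
  rintro ⟨hxv, hvu⟩
  have hix : ¬ IsolatedIn n G x := by
    intro hix
    have hiv : IsolatedIn n G v := by
      by_contra hiv
      exact (labelKey_lt_of_isolatedIn hx.1 hv.2 hix hiv).not_gt hxv
    have := (hkey x hx).1 hix
    have := (hkey v hv).1 hiv
    simp only [labelKey, if_pos hix, if_pos hiv] at hxv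
    omega
  obtain ⟨rx, hrx, hpx⟩ := (hkey x hx).2 hix
  have hiv := (hkey.lt_length_iff hv).mp (by omega)
  have hiu := (hkey.lt_length_iff hu).mp (by omega)
  obtain ⟨rv, hrv, hpv⟩ := (hkey v hv).2 hiv
  obtain ⟨ru, hru, hpu⟩ := (hkey u hu).2 hiu
  simp only [labelKey, if_neg hix, if_neg hiv, if_neg hiu] at hxv hvu
  exact hA ⟨ru, rv, rx, by simpa [Fin.lt_def, ← hpu, ← hpv] using huv,
    by simpa [Fin.lt_def, ← hpv, ← hpx] using hvx, by rwa [hrx.1, hrv.1],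
    by rwa [hrv.1, hru.1]⟩

end PositionKey

theorem exists_relabeling_of_keys {n : ℕ} {G : SimpleGraph ℕ} {vkey pkey : ℕ → ℕ}
    (hvinj : InjOn vkey (Icc 1 n)) (hpinj : InjOn pkey (Icc 1 n))
    (hiso : ∀ u ∈ Icc 1 n, ∀ v ∈ Icc 1 n,
      IsolatedIn n G u → ¬ IsolatedIn n G v → vkey v < vkey u)
    (hadj : ∀ u ∈ Icc 1 n, ∀ v ∈ Icc 1 n, vkey u < vkey v → (G.Adj u v ↔ pkey v < pkey u))
    (hdec : ∀ u ∈ Icc 1 n, ∀ v ∈ Icc 1 n, ∀ x ∈ Icc 1 n, pkey u < pkey v → pkey v < pkey x →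
      ¬ (vkey x < vkey v ∧ vkey v < vkey u)) :
    ∃ σ : Equiv.Perm ℕ,
      (∀ x, 1 ≤ x → x ≤ n → 1 ≤ σ x ∧ σ x ≤ n) ∧
      (∀ i j, 1 ≤ i → i ≤ n → 1 ≤ j → j ≤ n →
        IsolatedIn n G (σ i) → ¬ IsolatedIn n G (σ j) → j < i) ∧
      ∃ π, IsPermWord n π ∧ Avoids321 π ∧
        (∀ i j, 1 ≤ i → i < j → j ≤ n → (G.Adj (σ i) (σ j) ↔ EveryBefore π j i)) := by
  obtain ⟨σ, hσ, hmono⟩ := exists_perm_strictMonoOn_comp hvinj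
  obtain ⟨π, hπ, hsorted⟩ := exists_isPermWord_pairwise (hpinj.comp σ.injective.injOn hσ)
  have hmem : ∀ {t}, t ∈ π → t ∈ Icc 1 n := hπ.mem_iff.mp
  refine ⟨σ, fun x h1 h2 => hσ ⟨h1, h2⟩, fun i j hi1 hin hj1 hjn hi hj => ?_, π, hπ,
    avoids321_of_pairwise hsorted fun a ha b hb c hc hab hbc ⟨hcb, hba⟩ =>
      hdec _ (hσ (hmem ha)) _ (hσ (hmem hb)) _ (hσ (hmem hc)) hab hbc
        ⟨hmono (hmem hc) (hmem hb) hcb, hmono (hmem hb) (hmem ha) hba⟩,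
    fun i j hi1 hij hjn => ?_⟩
  · by_contra! hij
    have hji := hiso _ (hσ ⟨hi1, hin⟩) _ (hσ ⟨hj1, hjn⟩) hi hj
    rcases hij.lt_or_eq with hij | rfl
    · exact (hmono ⟨hi1, hin⟩ ⟨hj1, hjn⟩ hij).not_gt hji
    · exact hj hi
  · have hi : i ∈ Icc 1 n := ⟨hi1, by omega⟩
    have hj : j ∈ Icc 1 n := ⟨by omega, hjn⟩
    rw [everyBefore_iff_of_pairwise_s9 hsorted (hπ.mem_iff.mpr hj)
      (hπ.mem_iff.mpr hi)]
    exact hadj _ (hσ hi) _ (hσ hj) (hmono hi hj hij)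

theorem stmt_9 (n : ℕ) (G : SimpleGraph ℕ)
    (h : ∃ w, Avoids321 w ∧ Represents12 n G w) :
    ∃ σ : Equiv.Perm ℕ,
      (∀ x, 1 ≤ x → x ≤ n → 1 ≤ σ x ∧ σ x ≤ n) ∧
      (∀ i j, 1 ≤ i → i ≤ n → 1 ≤ j → j ≤ n →
        IsolatedIn n G (σ i) → ¬ IsolatedIn n G (σ j) → j < i) ∧
      ∃ π, IsPermWord n π ∧ Avoids321 π ∧
        (∀ i j, 1 ≤ i → i < j → j ≤ n → (G.Adj (σ i) (σ j) ↔ EveryBefore π j i)) := by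
  obtain ⟨w, hA, hrep⟩ := h
  obtain ⟨pkey, hkey⟩ := exists_isPositionKey hrep hA
  exact exists_relabeling_of_keys (labelKey_injOn n G) hkey.injOn
    (fun u hu v hv => labelKey_lt_of_isolatedIn hu.1 hv.2)
    (fun u hu v hv => hkey.adj_iff hrep hu hv)
    (fun u hu v hv x hx => hkey.not_decreasing hA hu hv hx)
end

section
/- A graph is 12-representable by a 321-avoiding word if and only if it is a bipartite permutation graph, i.e., it is isomorphic to the permutation graph of some permutation and contains no odd cycle. -/
/-- Every occurrence of `j` precedes every occurrence of `i` in the word `w`. -/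
def EveryBeforeF {n : ℕ} (w : List (Fin n)) (j i : Fin n) : Prop :=
  ∀ p q : Fin w.length, w.get p = j → w.get q = i → p < q

/-- The word `w` over `Fin n` 12-represents the graph `G` on `Fin n`:
`w` contains each letter at least once, and for `i < j`, `i` and `j` are adjacent
iff every `j` occurs before every `i` in `w`. -/
def RepF {n : ℕ} (G : SimpleGraph (Fin n)) (w : List (Fin n)) : Prop :=
  (∀ i : Fin n, i ∈ w) ∧
  (∀ i j : Fin n, i < j → (G.Adj i j ↔ EveryBeforeF w j i))

/-- `w` avoids the pattern 321: no strictly decreasing subsequence of length 3. -/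
def Avoids321F {n : ℕ} (w : List (Fin n)) : Prop :=
  ¬ ∃ p q r : Fin w.length, p < q ∧ q < r ∧ w.get r < w.get q ∧ w.get q < w.get p

/-- The permutation graph of `π`: `i < j` are adjacent iff `j` occurs before `i`
in the one-line listing of `π`, i.e. `π⁻¹ j < π⁻¹ i`. -/
def PermGraph {n : ℕ} (π : Equiv.Perm (Fin n)) : SimpleGraph (Fin n) :=
  SimpleGraph.fromRel (fun i j => i < j ∧ π.symm j < π.symm i)

/-!
For `u < v`, a word 12-represents the edge `uv` exactly when the last `v` precedes the first `u`.
If the word avoids 321, a vertex with a smaller neighbour has no larger one, so having a smaller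
neighbour is a proper 2-colouring. Read every non-isolated vertex at its last occurrence if it has a
smaller neighbour and at its first occurrence otherwise: the resulting order disagrees with the
order of labels exactly on the edges. Isolated vertices may occur anywhere in the word, so they
are moved behind all others in both orders; the two orders then exhibit the graph as a permutation
graph. Conversely, a permutation 12-represents its permutation graph, and a 321-pattern in it would
give a triangle, which a bipartite graph does not contain.
-/

open Function SimpleGraph

theorem exists_perm_lt_iff_lt {n : ℕ} {α : Type*} [LinearOrder α] {k : Fin n → α}
    (hk : Injective k) : ∃ e : Equiv.Perm (Fin n), ∀ x y, e x < e y ↔ k x < k y := by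
  have hmono : StrictMono (k ∘ Tuple.sort k) :=
    (Tuple.monotone_sort k).strictMono_of_injective (hk.comp (Tuple.sort k).injective)
  refine ⟨(Tuple.sort k).symm, fun x y => ?_⟩
  simpa using (hmono.lt_iff_lt (a := (Tuple.sort k).symm x) (b := (Tuple.sort k).symm y)).symm

theorem SimpleGraph.Iso.map_toEmbedding_eq {V W : Type*} {G : SimpleGraph V} {G' : SimpleGraph W}
    (e : G ≃g G') : G.map e.toEquiv.toEmbedding = G' := by
  ext a b
  rw [← comap_symm, comap_adj]
  exact e.symm.map_adj_iff

theorem permGraph_adj {n : ℕ} (π : Equiv.Perm (Fin n)) {i j : Fin n} :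
    (PermGraph π).Adj i j ↔
      i ≠ j ∧ (i < j ∧ π.symm j < π.symm i ∨ j < i ∧ π.symm i < π.symm j) :=
  fromRel_adj ..

def SimpleGraph.Iso.toPermGraph {n : ℕ} {G : SimpleGraph (Fin n)} {a b : Equiv.Perm (Fin n)}
    (h : ∀ x y, x < y → (G.Adj x y ↔ (a x < a y ↔ b y < b x))) :
    G ≃g PermGraph (b.symm.trans a) where
  toEquiv := a
  map_rel_iff' {x y} := by
    simp only [permGraph_adj, Equiv.symm_trans_apply, Equiv.symm_symm,
      Equiv.symm_apply_apply, a.injective.ne_iff]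
    obtain hxy | rfl | hxy := lt_trichotomy x y
    · rw [h x y hxy]
      grind [a.injective.ne hxy.ne, b.injective.ne hxy.ne]
    · simp
    · rw [G.adj_comm, h y x hxy]
      grind [a.injective.ne hxy.ne, b.injective.ne hxy.ne]

theorem exists_iso_permGraph_of_keys {n : ℕ} {α β : Type*} [LinearOrder α] [LinearOrder β]
    {G : SimpleGraph (Fin n)} {a : Fin n → α} {b : Fin n → β} (ha : Injective a)
    (hb : Injective b) (h : ∀ x y, x < y → (G.Adj x y ↔ (a x < a y ↔ b y < b x))) :
    ∃ π : Equiv.Perm (Fin n), Nonempty (G ≃g PermGraph π) := by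
  obtain ⟨ea, hea⟩ := exists_perm_lt_iff_lt ha
  obtain ⟨eb, heb⟩ := exists_perm_lt_iff_lt hb
  exact ⟨_, ⟨Iso.toPermGraph (a := ea) (b := eb) fun x y hxy => by rw [hea, heb, h x y hxy]⟩⟩

theorem permGraph_adj_apply {n : ℕ} (π : Equiv.Perm (Fin n)) {a b : Fin n} (hab : a < b)
    (h : π b < π a) : (PermGraph π).Adj (π a) (π b) :=
  (permGraph_adj π).2 ⟨h.ne', Or.inr ⟨h, by simpa using hab⟩⟩

theorem everyBeforeF_ofFn {n : ℕ} (π : Equiv.Perm (Fin n)) (i j : Fin n) :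
    EveryBeforeF (List.ofFn π) j i ↔ π.symm j < π.symm i := by
  have hlen : (List.ofFn π).length = n := List.length_ofFn
  simp only [EveryBeforeF, List.get_ofFn, ← Equiv.eq_symm_apply]
  refine ⟨fun h => ?_, fun h p q hp hq => ?_⟩
  · simpa using h ((π.symm j).cast hlen.symm) ((π.symm i).cast hlen.symm) (by simp) (by simp)
  · rw [← Fin.cast_lt_cast hlen, hp, hq]
    exact h

theorem repF_permGraph_ofFn {n : ℕ} (π : Equiv.Perm (Fin n)) :
    RepF (PermGraph π) (List.ofFn π) := by
  refine ⟨fun i => List.mem_ofFn.2 ⟨π.symm i, π.apply_symm_apply i⟩, fun i j hij => ?_⟩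
  rw [permGraph_adj, everyBeforeF_ofFn]
  grind

theorem avoids321F_ofFn {n : ℕ} {π : Equiv.Perm (Fin n)} (h : (PermGraph π).CliqueFree 3) :
    Avoids321F (List.ofFn π) := by
  rintro ⟨p, q, r, hpq, hqr, hrq, hqp⟩
  simp only [List.get_ofFn] at hrq hqp
  have hlen : (List.ofFn π).length = n := List.length_ofFn
  have hadj {s t : Fin (List.ofFn π).length} (hst : s < t)
      (h : π (t.cast hlen) < π (s.cast hlen)) :
      (PermGraph π).Adj (π (s.cast hlen)) (π (t.cast hlen)) :=
    permGraph_adj_apply π hst h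
  exact h _ (is3Clique_triple_iff.2
    ⟨hadj hpq hqp, hadj (hpq.trans hqr) (hrq.trans hqp), hadj hqr hrq⟩)

section WordPositions

open Finset

variable {n : ℕ} {w : List (Fin n)}

def occurrences (w : List (Fin n)) (v : Fin n) : Finset (Fin w.length) :=
  univ.filter fun p => w.get p = v

theorem mem_occurrences {v : Fin n} {p : Fin w.length} : p ∈ occurrences w v ↔ w.get p = v := by
  simp [occurrences]

theorem occurrences_nonempty {v : Fin n} (hv : v ∈ w) : (occurrences w v).Nonempty := by
  obtain ⟨p, hp⟩ := List.mem_iff_get.mp hv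
  exact ⟨p, mem_occurrences.2 hp⟩

def firstPos (hw : ∀ v, v ∈ w) (v : Fin n) : Fin w.length :=
  (occurrences w v).min' (occurrences_nonempty (hw v))

def lastPos (hw : ∀ v, v ∈ w) (v : Fin n) : Fin w.length :=
  (occurrences w v).max' (occurrences_nonempty (hw v))

def HasLowerNeighbor (H : SimpleGraph (Fin n)) (v : Fin n) : Prop := ∃ u < v, H.Adj u v

open Classical in
noncomputable def keyPos (hw : ∀ v, v ∈ w) (H : SimpleGraph (Fin n)) (v : Fin n) :
    Fin w.length :=
  if HasLowerNeighbor H v then lastPos hw v else firstPos hw v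

variable (hw : ∀ v, v ∈ w) {u v t : Fin n}

theorem get_firstPos : w.get (firstPos hw v) = v :=
  mem_occurrences.1 (min'_mem _ _)

theorem get_lastPos : w.get (lastPos hw v) = v :=
  mem_occurrences.1 (max'_mem _ _)

theorem firstPos_le {p : Fin w.length} (hp : w.get p = v) : firstPos hw v ≤ p :=
  min'_le _ _ (mem_occurrences.2 hp)

theorem le_lastPos {p : Fin w.length} (hp : w.get p = v) : p ≤ lastPos hw v :=
  le_max' _ _ (mem_occurrences.2 hp)

theorem firstPos_le_lastPos : firstPos hw v ≤ lastPos hw v :=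
  firstPos_le hw (get_lastPos hw)

theorem everyBeforeF_iff_lastPos_lt_firstPos :
    EveryBeforeF w v u ↔ lastPos hw v < firstPos hw u :=
  ⟨fun h => h _ _ (get_lastPos hw) (get_firstPos hw), fun h _ _ hp hq =>
    (le_lastPos hw hp).trans_lt (h.trans_le (firstPos_le hw hq))⟩

theorem lt_of_le_of_get_ne {p q : Fin w.length} (hpq : p ≤ q) (h : w.get p ≠ w.get q) :
    p < q :=
  hpq.lt_of_ne (ne_of_apply_ne w.get h)

variable {H : SimpleGraph (Fin n)}

theorem RepF.adj_iff (hR : RepF H w) (huv : u < v) :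
    H.Adj u v ↔ lastPos hR.1 v < firstPos hR.1 u := by
  rw [hR.2 u v huv, everyBeforeF_iff_lastPos_lt_firstPos]

theorem Avoids321F.not_hasLowerNeighbor_of_adj (hA : Avoids321F w) (hR : RepF H w)
    (huv : u < v) (hadj : H.Adj u v) : ¬ HasLowerNeighbor H u := by
  rintro ⟨t, htu, htu'⟩
  refine hA ⟨firstPos hR.1 v, firstPos hR.1 u, firstPos hR.1 t, ?_, ?_,
    by rwa [get_firstPos, get_firstPos], by rwa [get_firstPos, get_firstPos]⟩
  · exact (firstPos_le_lastPos _).trans_lt ((hR.adj_iff huv).1 hadj)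
  · exact (firstPos_le_lastPos _).trans_lt ((hR.adj_iff htu).1 htu')

theorem Avoids321F.lastPos_lt_firstPos (hA : Avoids321F w) (hR : RepF H w)
    (hu : HasLowerNeighbor H u) (huv : u < v) : lastPos hR.1 u < firstPos hR.1 v := by
  obtain ⟨t, htu, htu'⟩ := hu
  by_contra! hle
  have hlt := lt_of_le_of_get_ne hle (by rw [get_firstPos, get_lastPos]; exact huv.ne')
  exact hA ⟨_, _, _, hlt, (hR.adj_iff htu).1 htu', by rwa [get_firstPos, get_lastPos],
    by rwa [get_firstPos, get_lastPos]⟩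

theorem Avoids321F.firstPos_lt_firstPos (hA : Avoids321F w) (hR : RepF H w)
    (huv : u < v) (hvt : v < t) (hadj : H.Adj v t) : firstPos hR.1 u < firstPos hR.1 v := by
  by_contra! hle
  have hlt := lt_of_le_of_get_ne hle (by rw [get_firstPos, get_firstPos]; exact huv.ne')
  exact hA ⟨_, _, _, (hR.adj_iff hvt).1 hadj, hlt, by rwa [get_firstPos, get_firstPos],
    by rwa [get_firstPos, get_lastPos]⟩

theorem get_keyPos : w.get (keyPos hw H v) = v := by
  unfold keyPos
  split_ifs
  exacts [get_lastPos hw, get_firstPos hw]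

theorem keyPos_injective : Injective (keyPos hw H) :=
  fun x y hxy => by rw [← get_keyPos hw (v := x), hxy, get_keyPos]

theorem Avoids321F.adj_iff_keyPos_lt (hA : Avoids321F w) (hR : RepF H w) (huv : u < v)
    (hv : ∃ t, H.Adj v t) : H.Adj u v ↔ keyPos hR.1 H v < keyPos hR.1 H u := by
  by_cases hv' : HasLowerNeighbor H v
  · by_cases hu' : HasLowerNeighbor H u
    · simp only [keyPos, if_pos hu', if_pos hv']
      refine iff_of_false (fun hadj => hA.not_hasLowerNeighbor_of_adj hR huv hadj hu') ?_
      exact ((hA.lastPos_lt_firstPos hR hu' huv).trans_le (firstPos_le_lastPos _)).not_gt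
    · simp only [keyPos, if_pos hv', if_neg hu']
      exact hR.adj_iff huv
  · obtain ⟨t, hvt⟩ := hv
    have hvt' : v < t := (hvt.ne.lt_or_gt).resolve_right fun htv => hv' ⟨t, htv, hvt.symm⟩
    refine iff_of_false (fun hadj => hv' ⟨u, huv, hadj⟩) (not_lt.2 (le_of_lt ?_))
    simp only [keyPos, if_neg hv']
    split_ifs with hu'
    · exact hA.lastPos_lt_firstPos hR hu' huv
    · exact hA.firstPos_lt_firstPos hR huv hvt' hvt

theorem Avoids321F.colorable_two (hA : Avoids321F w) (hR : RepF H w) : H.Colorable 2 := by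
  classical
  have hcol : ∀ {u v}, u < v → H.Adj u v → HasLowerNeighbor H v ∧ ¬ HasLowerNeighbor H u :=
    fun huv hadj => ⟨⟨_, huv, hadj⟩, hA.not_hasLowerNeighbor_of_adj hR huv hadj⟩
  refine ⟨Coloring.mk (fun v => if HasLowerNeighbor H v then 0 else 1) fun {u v} hadj => ?_⟩
  rcases hadj.ne.lt_or_gt with huv | hvu
  · simp [hcol huv hadj]
  · simp [hcol hvu hadj.symm]

theorem Avoids321F.exists_iso_permGraph (hA : Avoids321F w) (hR : RepF H w) :
    ∃ π : Equiv.Perm (Fin n), Nonempty (H ≃g PermGraph π) := by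
  classical
  refine exists_iso_permGraph_of_keys
    (a := fun v => if ∃ t, H.Adj v t then (keyPos hR.1 H v : ℕ) else w.length + v)
    (b := fun v => if ∃ t, H.Adj v t then (v : ℕ) else n + v) ?_ ?_ ?_
  · intro x y hxy
    have := (keyPos hR.1 H x).isLt
    have := (keyPos hR.1 H y).isLt
    dsimp only at hxy
    split_ifs at hxy
    · exact keyPos_injective hR.1 (Fin.ext hxy)
    all_goals omega
  · intro x y hxy
    have := x.isLt
    have := y.isLt
    dsimp only at hxy
    split_ifs at hxy <;> omega
  · intro x y hxy
    have := (keyPos hR.1 H x).isLt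
    have := (keyPos hR.1 H y).isLt
    by_cases hy : ∃ t, H.Adj y t
    · by_cases hx : ∃ t, H.Adj x t
      · have hne := (keyPos_injective hR.1 (H := H)).ne hxy.ne
        rw [hA.adj_iff_keyPos_lt hR hxy hy]
        simp only [if_pos hx, if_pos hy]
        omega
      · refine iff_of_false (fun hadj => hx ⟨y, hadj⟩) ?_
        simp only [if_neg hx, if_pos hy]
        omega
    · refine iff_of_false (fun hadj => hy ⟨x, hadj.symm⟩) ?_
      simp only [if_neg hy]
      split_ifs <;> omega

end WordPositions

theorem stmt_10 (n : ℕ) (G : SimpleGraph (Fin n)) :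
    (∃ σ : Equiv.Perm (Fin n), ∃ w : List (Fin n),
      Avoids321F w ∧ RepF (G.map σ.toEmbedding) w) ↔
    ((∃ π : Equiv.Perm (Fin n), Nonempty (G ≃g PermGraph π)) ∧ G.Colorable 2) := by
  constructor
  · rintro ⟨σ, w, hA, hR⟩
    obtain ⟨π, ⟨e⟩⟩ := hA.exists_iso_permGraph hR
    exact ⟨⟨π, ⟨(Iso.map σ G).trans e⟩⟩, (hA.colorable_two hR).of_hom (Iso.map σ G).toHom⟩
  · rintro ⟨⟨π, ⟨e⟩⟩, hG⟩
    refine ⟨e.toEquiv, List.ofFn π, avoids321F_ofFn ?_, ?_⟩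
    · exact (hG.of_hom e.symm.toHom).cliqueFree (by norm_num)
    · rw [Iso.map_toEmbedding_eq e]
      exact repF_permGraph_ofFn π
end

section
/- Let H be the labeled graph on vertices {1,2,3,4} with edges exactly {23} and non-edges including 13 and 24. Then every word 12-representing H contains the pattern 123 (in fact contains a subsequence 1,3,2,4 in that order). -/
theorem stmt_12 (G : SimpleGraph ℕ)
    (h23 : G.Adj 2 3) (h13 : ¬ G.Adj 1 3) (h24 : ¬ G.Adj 2 4)
    (w : List ℕ) (hw : Represents12 4 G w) :
    (∃ p q r s : Fin w.length, p < q ∧ q < r ∧ r < s ∧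
      w.get p = 1 ∧ w.get q = 3 ∧ w.get r = 2 ∧ w.get s = 4) ∧
    (∃ p q r : Fin w.length, p < q ∧ q < r ∧
      w.get p < w.get q ∧ w.get q < w.get r) := by
  obtain ⟨hmem, hall, hiff⟩ := hw
  have e23 : EveryBefore w 3 2 := (hiff 2 3 (by norm_num) (by norm_num) (by norm_num)).mp h23
  have n13 : ¬ EveryBefore w 3 1 := fun h => h13 ((hiff 1 3 (by norm_num) (by norm_num) (by norm_num)).mpr h)
  have n24 : ¬ EveryBefore w 4 2 := fun h => h24 ((hiff 2 4 (by norm_num) (by norm_num) (by norm_num)).mpr h)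
  simp only [EveryBefore, not_forall] at n13 n24
  obtain ⟨b, a, hb3, ha1, hba⟩ := n13
  obtain ⟨d, c, hd4, hc2, hdc⟩ := n24
  have hab : a < b := lt_of_le_of_ne (not_lt.mp hba) (by
    intro h; rw [h, hb3] at ha1; norm_num at ha1)
  have hcd : c < d := lt_of_le_of_ne (not_lt.mp hdc) (by
    intro h; rw [h, hd4] at hc2; norm_num at hc2)
  have hbc : b < c := e23 b c hb3 hc2
  refine ⟨⟨a, b, c, d, hab, hbc, hcd, ha1, hb3, hc2, hd4⟩,
    ⟨a, b, d, hab, hbc.trans hcd, ?_, ?_⟩⟩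
  · rw [ha1, hb3]; norm_num
  · rw [hb3, hd4]; norm_num
end

section
/- Let H be the labeled graph on {1,2,3,4} with 13 ∈ E and 14, 23 ∉ E. Then every word 12-representing H contains the pattern 123 (indeed a subsequence 2,3,1,4). -/
theorem stmt_13 (G : SimpleGraph ℕ)
    (h13 : G.Adj 1 3) (h14 : ¬ G.Adj 1 4) (h23 : ¬ G.Adj 2 3)
    (w : List ℕ) (hw : Represents12 4 G w) :
    (∃ p q r s : Fin w.length, p < q ∧ q < r ∧ r < s ∧
      w.get p = 2 ∧ w.get q = 3 ∧ w.get r = 1 ∧ w.get s = 4) ∧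
    (∃ p q r : Fin w.length, p < q ∧ q < r ∧
      w.get p < w.get q ∧ w.get q < w.get r) := by
  obtain ⟨hmem, hall, hedge⟩ := hw
  have e13 : EveryBefore w 3 1 := (hedge 1 3 (by norm_num) (by norm_num) (by norm_num)).mp h13
  have e14 : ¬ EveryBefore w 4 1 := fun h => h14 ((hedge 1 4 (by norm_num) (by norm_num) (by norm_num)).mpr h)
  have e23 : ¬ EveryBefore w 3 2 := fun h => h23 ((hedge 2 3 (by norm_num) (by norm_num) (by norm_num)).mpr h)
  simp only [EveryBefore, not_forall] at e14 e23
  obtain ⟨d, c, hd4, hc1, hdc⟩ := e14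
  obtain ⟨b, a, hb3, ha2, hba⟩ := e23
  have hcd : c < d := lt_of_le_of_ne (le_of_not_gt hdc)
    (fun h => by rw [h, hd4] at hc1; norm_num at hc1)
  have hab : a < b := lt_of_le_of_ne (le_of_not_gt hba)
    (fun h => by rw [h, hb3] at ha2; norm_num at ha2)
  have hbc : b < c := e13 b c hb3 hc1
  refine ⟨⟨a, b, c, d, hab, hbc, hcd, ha2, hb3, hc1, hd4⟩,
    ⟨a, b, d, hab, hbc.trans hcd, ?_, ?_⟩⟩
  · rw [ha2, hb3]; norm_num
  · rw [hb3, hd4]; norm_num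
end

section
/- Let H be the labeled graph on {1,2,3} with 23 ∈ E and 13 ∉ E. Then every word 12-representing H contains the pattern 132, i.e., a subsequence a, c, b of letters with a < b < c in that order. -/
theorem stmt_14 (G : SimpleGraph ℕ)
    (h23 : G.Adj 2 3) (h13 : ¬ G.Adj 1 3)
    (w : List ℕ) (hw : Represents12 3 G w) :
    ∃ p q r : Fin w.length, p < q ∧ q < r ∧
      w.get p < w.get r ∧ w.get r < w.get q := by
  obtain ⟨_, hmem, hadj⟩ := hw
  have hEB23 : EveryBefore w 3 2 := (hadj 2 3 (by norm_num) (by norm_num) (by norm_num)).1 h23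
  have hnEB13 : ¬ EveryBefore w 3 1 := fun h =>
    h13 ((hadj 1 3 (by norm_num) (by norm_num) (by norm_num)).2 h)
  simp only [EveryBefore, not_forall] at hnEB13
  obtain ⟨a, b, ha, hb, hab⟩ := hnEB13
  -- b (letter 1) comes at or before a (letter 3)
  have hba : b < a := by
    rcases lt_trichotomy a b with h | h | h
    · exact absurd h hab
    · exfalso; rw [h, hb] at ha; norm_num at ha
    · exact h
  -- find an occurrence of 2
  obtain ⟨c, hc⟩ := List.get_of_mem (hmem 2 (by norm_num) (by norm_num))
  have hac : a < c := hEB23 a c ha hc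
  exact ⟨b, a, c, hba, hac, by rw [hb, hc]; norm_num, by rw [ha, hc]; norm_num⟩
end

section
/- Let H be the labeled graph on {1,2,3,4} with 14 ∈ E and 13, 24 ∉ E. Then every word 12-representing H contains the pattern 132 (indeed a subsequence 2,4,1,3). -/
theorem stmt_15 (G : SimpleGraph ℕ)
    (h14 : G.Adj 1 4) (h13 : ¬ G.Adj 1 3) (h24 : ¬ G.Adj 2 4)
    (w : List ℕ) (hw : Represents12 4 G w) :
    (∃ p q r s : Fin w.length, p < q ∧ q < r ∧ r < s ∧
      w.get p = 2 ∧ w.get q = 4 ∧ w.get r = 1 ∧ w.get s = 3) ∧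
    (∃ p q r : Fin w.length, p < q ∧ q < r ∧
      w.get p < w.get r ∧ w.get r < w.get q) := by
  obtain ⟨hmem, hall, hadj⟩ := hw
  -- 1-4 adjacent: every 4 before every 1
  have h41 : EveryBefore w 4 1 := (hadj 1 4 (by norm_num) (by norm_num) (by norm_num)).mp h14
  -- 1-3 not adjacent: some 1 before some 3
  have h31 : ¬ EveryBefore w 3 1 :=
    fun h => h13 ((hadj 1 3 (by norm_num) (by norm_num) (by norm_num)).mpr h)
  have h42 : ¬ EveryBefore w 4 2 :=
    fun h => h24 ((hadj 2 4 (by norm_num) (by norm_num) (by norm_num)).mpr h)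
  simp only [EveryBefore, not_forall] at h31 h42
  obtain ⟨s, r, hs3, hr1, hsr⟩ := h31
  obtain ⟨q, p, hq4, hp2, hqp⟩ := h42
  have hrs : r < s := by
    rcases lt_trichotomy r s with h | h | h
    · exact h
    · rw [h, hs3] at hr1; omega
    · exact absurd h hsr
  have hpq : p < q := by
    rcases lt_trichotomy p q with h | h | h
    · exact h
    · rw [h, hq4] at hp2; omega
    · exact absurd h hqp
  have hqr : q < r := h41 q r hq4 hr1
  constructor
  · exact ⟨p, q, r, s, hpq, hqr, hrs, hp2, hq4, hr1, hs3⟩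
  · refine ⟨p, q, s, hpq, lt_trans hqr hrs, ?_, ?_⟩ <;> omega
end

section
/- Let G be a labeled graph on [n], and call a vertex v a b-vertex if there exist a < v < c with av ∉ E, vc ∉ E, and ac ∈ E. Then G contains no ordered 4-vertex pattern of either of the following types: (vertices w < x < y < z with wx ∉ E, wz ∈ E, xz ∉ E, xy ∈ E) or (vertices w < x < y < z with wx ∉ E, wy ∈ E, xy ∉ E, xz ∈ E), if and only if no b-vertex v of G has a neighbor d with v < d. -/
theorem stmt_17 (n : ℕ) (G : SimpleGraph ℕ) :
    ((¬ ∃ w x y z, 1 ≤ w ∧ w < x ∧ x < y ∧ y < z ∧ z ≤ n ∧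
        ¬ G.Adj w x ∧ G.Adj w z ∧ ¬ G.Adj x z ∧ G.Adj x y) ∧
     (¬ ∃ w x y z, 1 ≤ w ∧ w < x ∧ x < y ∧ y < z ∧ z ≤ n ∧
        ¬ G.Adj w x ∧ G.Adj w y ∧ ¬ G.Adj x y ∧ G.Adj x z)) ↔
    (∀ v a c d, 1 ≤ a → a < v → v < c → c ≤ n →
      ¬ G.Adj a v → ¬ G.Adj v c → G.Adj a c →
      v < d → d ≤ n → ¬ G.Adj v d) := by
  constructor
  · rintro ⟨h1, h2⟩ v a c d ha hav hvc hcn hnav hnvc hac hvd hdn hadj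
    rcases lt_trichotomy d c with hdc | rfl | hcd
    · exact h1 ⟨a, v, d, c, ha, hav, hvd, hdc, hcn, hnav, hac, hnvc, hadj⟩
    · exact hnvc hadj
    · exact h2 ⟨a, v, c, d, ha, hav, hvc, hcd, hdn, hnav, hac, hnvc, hadj⟩
  · intro h
    constructor
    · rintro ⟨w, x, y, z, h1, h2, h3, h4, h5, hwx, hwz, hxz, hxy⟩
      exact h x w z y h1 h2 (h3.trans h4) h5 hwx hxz hwz h3 (h4.le.trans h5) hxy
    · rintro ⟨w, x, y, z, h1, h2, h3, h4, h5, hwx, hwy, hxy, hxz⟩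
      exact h x w y z h1 h2 h3 (h4.le.trans h5) hwx hxy hwy (h3.trans h4) h5 hxz
end

section
/- Let H be the labeled graph on four vertices a < b < c and d with b < d, such that ab, bc ∉ E and ac, bd ∈ E. Then every word 12-representing H contains the pattern 211 (indeed a subsequence d, b, b, i.e., a larger letter followed by two copies of a smaller letter). -/
/-- The word `w` 12-represents the graph `G` on the vertex set `V` (with the order
induced from ℕ). -/
def RepresentsOn (V : Finset ℕ) (G : SimpleGraph ℕ) (w : List ℕ) : Prop :=
  (∀ x ∈ w, x ∈ V) ∧
  (∀ i ∈ V, i ∈ w) ∧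
  (∀ i j, i ∈ V → j ∈ V → i < j → (G.Adj i j ↔ EveryBefore w j i))

theorem stmt_18 (G : SimpleGraph ℕ) (a b c d : ℕ)
    (hab : a < b) (hbc : b < c) (hbd : b < d)
    (h1 : ¬ G.Adj a b) (h2 : ¬ G.Adj b c) (h3 : G.Adj a c) (h4 : G.Adj b d)
    (w : List ℕ) (hw : RepresentsOn {a, b, c, d} G w) :
    ∃ p q r : Fin w.length, p < q ∧ q < r ∧
      w.get p = d ∧ w.get q = b ∧ w.get r = b := by
  obtain ⟨hwV, hVw, hiff⟩ := hw
  have ha : a ∈ ({a, b, c, d} : Finset ℕ) := by simp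
  have hb : b ∈ ({a, b, c, d} : Finset ℕ) := by simp
  have hc : c ∈ ({a, b, c, d} : Finset ℕ) := by simp
  have hd : d ∈ ({a, b, c, d} : Finset ℕ) := by simp
  have e1 : ¬ EveryBefore w b a := fun h => h1 ((hiff a b ha hb hab).mpr h)
  have e2 : ¬ EveryBefore w c b := fun h => h2 ((hiff b c hb hc hbc).mpr h)
  have e3 : EveryBefore w c a := (hiff a c ha hc (hab.trans hbc)).mp h3
  have e4 : EveryBefore w d b := (hiff b d hb hd hbd).mp h4
  unfold EveryBefore at e1 e2
  push_neg at e1 e2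
  obtain ⟨p2, qa, hp2, hqa, hle1⟩ := e1
  obtain ⟨pc, qb, hpc, hqb, hle2⟩ := e2
  obtain ⟨pd, hpd⟩ := List.mem_iff_get.mp (hVw d hd)
  refine ⟨pd, qb, p2, e4 pd qb hpd hqb, ?_, hpd, hqb, hp2⟩
  exact lt_of_le_of_lt hle2 (lt_of_lt_of_le (e3 pc qa hpc hqa) hle1)
end
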